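/- Let k be a real number and set D(u,v) = 1 + (1+k)u² + (1−k)v². Define the Ricci potentials 𝓡₁(u,v) = (1/√2)·(1 + (1+k)(u²+v²))/D(u,v) and 𝓡₂(u,v) = (1/√2)·(1 + (1−k)(u²+v²))/D(u,v). Then for all (u,v) ∈ ℝ², the Jacobian determinant satisfies (∂𝓡₁/∂u)(∂𝓡₂/∂v) − (∂𝓡₁/∂v)(∂𝓡₂/∂u) = 8k²uv / D(u,v)³. -/

import Mathlib

/-! Away from the zero set of `D` the four partial derivatives come from the quotient rule, and
the symmetry `Ric2 k u v = Ric1 (-k) v u` reduces them to the two partials of `Ric1`. The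
Jacobian then collapses because `(1 + (1+k)u²)(1 + (1-k)v²) - (1-k²)u²v² = D`.

Where `D = 0` the right side is `0` by division by zero. The numerators of `Ric1` and `Ric2` are
there `√2 k v²` and `-√2 k u²`, with `k ≠ 0` and `(u, v) ≠ 0`, so one of the potentials has a
genuine pole; its partial derivatives are then the junk value `0`, and so is the left side. -/

open Real

/-- The common denominator `D = 1 + (1+k)u² + (1-k)v²`. -/
noncomputable def Dk (k u v : ℝ) : ℝ := 1 + (1 + k) * u ^ 2 + (1 - k) * v ^ 2

/-- The first Ricci potential of the generalized Taub-NUT instanton. -/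
noncomputable def Ric1 (k u v : ℝ) : ℝ :=
  (1 / Real.sqrt 2) * (1 + (1 + k) * (u ^ 2 + v ^ 2)) / Dk k u v

/-- The second Ricci potential of the generalized Taub-NUT instanton. -/
noncomputable def Ric2 (k u v : ℝ) : ℝ :=
  (1 / Real.sqrt 2) * (1 + (1 - k) * (u ^ 2 + v ^ 2)) / Dk k u v

open Filter Topology

theorem eventually_sq_ne_sq_nhdsNE (x : ℝ) : ∀ᶠ t in 𝓝[≠] x, t ^ 2 ≠ x ^ 2 := by
  have hne_neg : ∀ᶠ t in 𝓝[≠] x, t ≠ -x := by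
    rcases eq_or_ne x 0 with rfl | hx
    · rw [neg_zero]; exact self_mem_nhdsWithin
    · exact eventually_ne_nhdsWithin fun h => hx (by linarith)
  filter_upwards [hne_neg, self_mem_nhdsWithin] with t h1 h2
  rw [Ne, sq_eq_sq_iff_eq_or_eq_neg, not_or]
  exact ⟨h2, h1⟩

theorem deriv_div_eq_zero_of_pole {N D : ℝ → ℝ} {x : ℝ} (hN : ContinuousAt N x)
    (hD : ContinuousAt D x) (hNx : N x ≠ 0) (hDx : D x = 0) (hD_ne : ∀ᶠ t in 𝓝[≠] x, D t ≠ 0) :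
    deriv (fun t => N t / D t) x = 0 := by
  refine deriv_zero_of_not_differentiableAt fun hdiff => hNx ?_
  have hprod : Tendsto (fun t => N t / D t * D t) (𝓝[≠] x) (𝓝 0) := by
    simpa [hDx] using (hdiff.continuousAt.tendsto.mul hD.tendsto).mono_left nhdsWithin_le_nhds
  refine tendsto_nhds_unique (hN.tendsto.mono_left nhdsWithin_le_nhds) (hprod.congr' ?_)
  filter_upwards [hD_ne] with t ht
  exact div_mul_cancel₀ _ ht

theorem Dk_neg_swap (k u v : ℝ) : Dk (-k) v u = Dk k u v := by
  unfold Dk; ring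

theorem Ric2_eq_Ric1_neg_swap (k u v : ℝ) : Ric2 k u v = Ric1 (-k) v u := by
  unfold Ric1 Ric2; rw [Dk_neg_swap]; ring_nf

theorem hasDerivAt_Ric1_fst {k u v : ℝ} (hD : Dk k u v ≠ 0) :
    HasDerivAt (fun t => Ric1 k t v)
      (-(2 * √2 * k * (1 + k) * u * v ^ 2) / Dk k u v ^ 2) u := by
  have hsq : HasDerivAt (fun t : ℝ => t ^ 2) (2 * u) u := by simpa using hasDerivAt_pow 2 u
  have hN := ((hsq.add_const (v ^ 2)).const_mul (1 + k) |>.const_add 1).const_mul (1 / √2)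
  have hDer := ((hsq.const_mul (1 + k)).const_add 1).add_const ((1 - k) * v ^ 2)
  refine (hN.fun_div hDer hD).congr_deriv ?_
  unfold Dk at hD ⊢
  field_simp
  rw [Real.sq_sqrt zero_le_two]
  ring

theorem hasDerivAt_Ric1_snd {k u v : ℝ} (hD : Dk k u v ≠ 0) :
    HasDerivAt (fun t => Ric1 k u t)
      (2 * √2 * k * v * (1 + (1 + k) * u ^ 2) / Dk k u v ^ 2) v := by
  have hsq : HasDerivAt (fun t : ℝ => t ^ 2) (2 * v) v := by simpa using hasDerivAt_pow 2 v
  have hN := ((hsq.const_add (u ^ 2)).const_mul (1 + k) |>.const_add 1).const_mul (1 / √2)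
  have hDer := (hsq.const_mul (1 - k)).const_add (1 + (1 + k) * u ^ 2)
  refine (hN.fun_div hDer hD).congr_deriv ?_
  unfold Dk at hD ⊢
  field_simp
  rw [Real.sq_sqrt zero_le_two]
  ring

theorem Ric1_numerator_ne_zero {k u v : ℝ} (hD : Dk k u v = 0) (hv : v ≠ 0) :
    1 / √2 * (1 + (1 + k) * (u ^ 2 + v ^ 2)) ≠ 0 := by
  have hk : k ≠ 0 := by rintro rfl; unfold Dk at hD; nlinarith
  have hN : 1 + (1 + k) * (u ^ 2 + v ^ 2) = 2 * k * v ^ 2 := by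
    unfold Dk at hD; linear_combination hD
  rw [hN]
  simp [hk, hv]

theorem deriv_Ric1_fst_eq_zero {k u v : ℝ} (hD : Dk k u v = 0) (hv : v ≠ 0) :
    deriv (fun t => Ric1 k t v) u = 0 := by
  have hk : 1 + k ≠ 0 := by intro h; unfold Dk at hD; nlinarith
  refine deriv_div_eq_zero_of_pole (by fun_prop) (by unfold Dk; fun_prop)
    (Ric1_numerator_ne_zero hD hv) hD ?_
  filter_upwards [eventually_sq_ne_sq_nhdsNE u] with t ht
  have hDt : Dk k t v = (1 + k) * (t ^ 2 - u ^ 2) := by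
    unfold Dk at hD ⊢; linear_combination hD
  rw [hDt]
  exact mul_ne_zero hk (sub_ne_zero.2 ht)

theorem deriv_Ric1_snd_eq_zero {k u v : ℝ} (hD : Dk k u v = 0) (hv : v ≠ 0) :
    deriv (fun t => Ric1 k u t) v = 0 := by
  have hk : 1 - k ≠ 0 := by intro h; unfold Dk at hD; nlinarith
  refine deriv_div_eq_zero_of_pole (by fun_prop) (by unfold Dk; fun_prop)
    (Ric1_numerator_ne_zero hD hv) hD ?_
  filter_upwards [eventually_sq_ne_sq_nhdsNE v] with t ht
  have hDt : Dk k u t = (1 - k) * (t ^ 2 - v ^ 2) := by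
    unfold Dk at hD ⊢; linear_combination hD
  rw [hDt]
  exact mul_ne_zero hk (sub_ne_zero.2 ht)

/-- The Jacobian determinant of the Ricci potentials (the coefficient of the Ricci
pseudo-volume form `d𝓡₁ ∧ d𝓡₂`) equals `8k²uv/D³`. -/
theorem stmt_10 (k : ℝ) :
    ∀ u v : ℝ,
      deriv (fun t => Ric1 k t v) u * deriv (fun t => Ric2 k u t) v
        - deriv (fun t => Ric1 k u t) v * deriv (fun t => Ric2 k t v) u
      = 8 * k ^ 2 * u * v / (Dk k u v) ^ 3 := by
  intro u v
  simp only [Ric2_eq_Ric1_neg_swap]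
  by_cases hD : Dk k u v = 0
  · have hD' : Dk (-k) v u = 0 := by rwa [Dk_neg_swap]
    rw [hD]
    rcases eq_or_ne v 0 with rfl | hv
    · have hu : u ≠ 0 := by rintro rfl; simp [Dk] at hD
      simp [deriv_Ric1_fst_eq_zero hD' hu, deriv_Ric1_snd_eq_zero hD' hu]
    · simp [deriv_Ric1_fst_eq_zero hD hv, deriv_Ric1_snd_eq_zero hD hv]
  · have hD' : Dk (-k) v u ≠ 0 := by rwa [Dk_neg_swap]
    rw [(hasDerivAt_Ric1_fst hD).deriv, (hasDerivAt_Ric1_snd hD).deriv,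
      (hasDerivAt_Ric1_fst hD').deriv, (hasDerivAt_Ric1_snd hD').deriv, Dk_neg_swap]
    field_simp
    rw [Real.sq_sqrt zero_le_two]
    unfold Dk
    ring
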